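/- arXiv:2506.07333 — 3 statements merged into one kernel-verified Lean document; each statement's English description precedes it below -/
import Mathlib

section
/- Let h : ℝ^n → (-∞,∞] be proper and lsc. Then h is convex if and only if h coincides with its closed convex hull cl conv h on the relative interior of dom(cl conv h). -/
open Set Filter Topology

noncomputable section

variable {n : ℕ}

local notation "En" => EuclideanSpace ℝ (Fin n)

/-- Convexity of an `EReal`-valued function on `ℝⁿ`. -/
def ConvexE (g : EuclideanSpace ℝ (Fin n) → EReal) : Prop :=
  ∀ x y : EuclideanSpace ℝ (Fin n), ∀ t : ℝ, 0 < t → t < 1 →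
    g (t • x + (1 - t) • y) ≤ (t : EReal) * g x + ((1 - t : ℝ) : EReal) * g y

/-- The closed convex hull of `h`: pointwise supremum of all lsc convex minorants. -/
def clConvHullFn (h : EuclideanSpace ℝ (Fin n) → EReal) (x : EuclideanSpace ℝ (Fin n)) :
    EReal :=
  sSup {r | ∃ g, ConvexE g ∧ LowerSemicontinuous g ∧ (∀ y, g y ≤ h y) ∧ r = g x}

private lemma coe_mul_ne_top' {t : ℝ} (ht : 0 < t) {a : EReal} (ha : a ≠ ⊤) :
    (t : EReal) * a ≠ ⊤ := by
  induction a with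
  | bot => rw [EReal.coe_mul_bot_of_pos ht]; exact bot_ne_top
  | coe x => rw [← EReal.coe_mul]; exact EReal.coe_ne_top _
  | top => exact absurd rfl ha

private lemma coe_mul_ne_bot' {t : ℝ} (ht : 0 < t) {a : EReal} (ha : a ≠ ⊥) :
    (t : EReal) * a ≠ ⊥ := by
  induction a with
  | bot => exact absurd rfl ha
  | coe x => rw [← EReal.coe_mul]; exact EReal.coe_ne_bot _
  | top => rw [EReal.coe_mul_top_of_pos ht]; exact top_ne_bot

private lemma clConv_le (h : En → EReal) (x : En) : clConvHullFn h x ≤ h x := by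
  refine sSup_le ?_
  rintro r ⟨g, -, -, hle, rfl⟩
  exact hle x

private lemma le_clConv {h g : En → EReal} (hg : ConvexE g) (hl : LowerSemicontinuous g)
    (hle : ∀ y, g y ≤ h y) (x : En) : g x ≤ clConvHullFn h x :=
  le_sSup ⟨g, hg, hl, hle, rfl⟩

private lemma convexE_clConv (h : En → EReal) : ConvexE (clConvHullFn h) := by
  intro x y t ht ht1
  refine sSup_le ?_
  rintro r ⟨g, hgc, hgl, hgle, rfl⟩
  refine (hgc x y t ht ht1).trans (add_le_add ?_ ?_)
  · exact mul_le_mul_of_nonneg_left (le_clConv hgc hgl hgle x) (EReal.coe_nonneg.2 ht.le)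
  · exact mul_le_mul_of_nonneg_left (le_clConv hgc hgl hgle y)
      (EReal.coe_nonneg.2 (by linarith))

private lemma convex_domClConv (h : En → EReal) :
    Convex ℝ {y | clConvHullFn h y ≠ ⊤} := by
  intro x hx y hy a b ha hb hab
  rcases ha.eq_or_lt with rfl | ha'
  · have hb1 : b = 1 := by linarith
    subst hb1; simpa using hy
  rcases hb.eq_or_lt with rfl | hb'
  · have ha1 : a = 1 := by linarith
    subst ha1; simpa using hx
  have ha1 : a < 1 := by linarith
  have hbeq : b = 1 - a := by linarith
  subst hbeq
  have hle := convexE_clConv h x y a ha' ha1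
  refine ne_top_of_le_ne_top ?_ hle
  exact (EReal.add_lt_top (coe_mul_ne_top' ha' hx) (coe_mul_ne_top' (by linarith) hy)).ne

private lemma combo_mem_intrinsicInterior {s : Set En} (hs : Convex ℝ s) {w z : En}
    (hw : w ∈ intrinsicInterior ℝ s) (hz : z ∈ s) {t : ℝ} (ht : 0 < t) (ht1 : t ≤ 1) :
    t • w + (1 - t) • z ∈ intrinsicInterior ℝ s := by
  obtain ⟨w', hw', hww⟩ := mem_intrinsicInterior.1 hw
  have hwS : w ∈ affineSpan ℝ s := hww ▸ w'.2
  have hzS : z ∈ affineSpan ℝ s := subset_affineSpan ℝ s hz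
  have hpS : t • w + (1 - t) • z ∈ affineSpan ℝ s := by
    have := (affineSpan ℝ s).smul_vsub_vadd_mem t hwS hzS hzS
    have heq : t • (w -ᵥ z) +ᵥ z = t • w + (1 - t) • z := by
      simp only [vsub_eq_sub, vadd_eq_add]; module
    rwa [heq] at this
  set ψ : affineSpan ℝ s → affineSpan ℝ s := fun u =>
    ⟨t⁻¹ • ((u : En) -ᵥ z) +ᵥ z, (affineSpan ℝ s).smul_vsub_vadd_mem t⁻¹ u.2 hzS hzS⟩
    with hψdef
  have hψcont : Continuous ψ := by
    refine Continuous.subtype_mk ?_ _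
    simp only [vsub_eq_sub, vadd_eq_add]
    exact ((continuous_subtype_val.sub continuous_const).const_smul t⁻¹).add continuous_const
  refine mem_intrinsicInterior.2 ⟨⟨t • w + (1 - t) • z, hpS⟩, ?_, rfl⟩
  refine mem_interior.2 ⟨ψ ⁻¹' interior ((↑) ⁻¹' s), ?_,
    isOpen_interior.preimage hψcont, ?_⟩
  · intro u hu
    have hu' : ψ u ∈ interior ((↑) ⁻¹' s : Set (affineSpan ℝ s)) := hu
    have h1p : ψ u ∈ ((↑) ⁻¹' s : Set (affineSpan ℝ s)) := interior_subset hu'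
    have h1 : (↑(ψ u) : En) ∈ s := h1p
    have h1' : t⁻¹ • ((u : En) - z) + z ∈ s := by
      simpa only [hψdef, vsub_eq_sub, vadd_eq_add] using h1
    have hcomb := hs h1' hz (a := t) (b := 1 - t) ht.le (by linarith) (by ring)
    have heq : t • (t⁻¹ • ((u : En) - z) + z) + (1 - t) • z = (u : En) := by
      rw [smul_add, smul_smul, mul_inv_cancel₀ ht.ne', one_smul]; module
    show (u : En) ∈ s
    rwa [heq] at hcomb
  · show ψ _ ∈ interior _
    have : ψ ⟨t • w + (1 - t) • z, hpS⟩ = w' := by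
      apply Subtype.ext
      show t⁻¹ • ((t • w + (1 - t) • z) -ᵥ z) +ᵥ z = (w' : En)
      rw [← hww]
      simp only [vsub_eq_sub, vadd_eq_add]
      have heq : t • (w' : En) + (1 - t) • z - z = t • ((w' : En) - z) := by module
      rw [heq, smul_smul, inv_mul_cancel₀ ht.ne', one_smul]
      abel
    rw [this]
    exact hw'

/-- a proper lsc `h : ℝⁿ → (-∞,∞]` is convex iff it coincides with its
closed convex hull on the relative interior of `dom (cl conv h)`. -/
theorem convex_iff_eq_clConvHull_on_relint (h : En → EReal)
    (hproper : (∃ x, h x ≠ ⊤) ∧ ∀ x, h x ≠ ⊥)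
    (hlsc : LowerSemicontinuous h) :
    ConvexE h ↔
      ∀ x ∈ intrinsicInterior ℝ {y | clConvHullFn h y ≠ ⊤}, h x = clConvHullFn h x := by
  constructor
  · intro hconv x _
    exact le_antisymm (le_clConv hconv hlsc (fun _ => le_rfl) x) (clConv_le h x)
  · intro heq x y t ht ht1
    set F := clConvHullFn h with hF
    by_cases hx : h x = ⊤
    · rw [hx, EReal.coe_mul_top_of_pos ht,
        EReal.top_add_of_ne_bot (coe_mul_ne_bot' (by linarith) (hproper.2 y))]
      exact le_top
    by_cases hy : h y = ⊤
    · rw [hy, EReal.coe_mul_top_of_pos (by linarith),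
        EReal.add_top_of_ne_bot (coe_mul_ne_bot' ht (hproper.2 x))]
      exact le_top
    obtain ⟨a, ha⟩ : ∃ a : ℝ, h x = ↑a :=
      ⟨(h x).toReal, (EReal.coe_toReal hx (hproper.2 x)).symm⟩
    obtain ⟨b, hb⟩ : ∃ b : ℝ, h y = ↑b :=
      ⟨(h y).toReal, (EReal.coe_toReal hy (hproper.2 y)).symm⟩
    rw [ha, hb, ← EReal.coe_mul, ← EReal.coe_mul, ← EReal.coe_add]
    set M : ℝ := t * a + (1 - t) * b with hM
    by_contra hlt
    push_neg at hlt
    obtain ⟨c, hMc, hcz⟩ := EReal.lt_iff_exists_real_btwn.1 hlt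
    have hxF : F x ≠ ⊤ := ne_top_of_le_ne_top (ha ▸ EReal.coe_ne_top a) (clConv_le h x)
    have hyF : F y ≠ ⊤ := ne_top_of_le_ne_top (hb ▸ EReal.coe_ne_top b) (clConv_le h y)
    have hdom : Convex ℝ {u | F u ≠ ⊤} := convex_domClConv h
    have hzdom : F (t • x + (1 - t) • y) ≠ ⊤ :=
      hdom hxF hyF ht.le (by linarith) (by ring)
    obtain ⟨w, hw⟩ := Set.Nonempty.intrinsicInterior hdom ⟨x, hxF⟩
    have hwdom : F w ≠ ⊤ := intrinsicInterior_subset hw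
    have hweq : h w = F w := heq w hw
    have hwbot : F w ≠ ⊥ := hweq ▸ hproper.2 w
    obtain ⟨r, hr⟩ : ∃ r : ℝ, F w = ↑r :=
      ⟨(F w).toReal, (EReal.coe_toReal hwdom hwbot).symm⟩
    have hFz : F (t • x + (1 - t) • y) ≤ (M : EReal) := by
      refine (convexE_clConv h x y t ht ht1).trans ?_
      have h1 : F x ≤ (a : EReal) := ha ▸ clConv_le h x
      have h2 : F y ≤ (b : EReal) := hb ▸ clConv_le h y
      calc (t : EReal) * F x + ((1 - t : ℝ) : EReal) * F y
          ≤ (t : EReal) * a + ((1 - t : ℝ) : EReal) * b :=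
            add_le_add (mul_le_mul_of_nonneg_left h1 (EReal.coe_nonneg.2 ht.le))
              (mul_le_mul_of_nonneg_left h2 (EReal.coe_nonneg.2 (by linarith)))
        _ = (M : EReal) := by rw [hM, ← EReal.coe_mul, ← EReal.coe_mul, ← EReal.coe_add]
    have hU : ∀ᶠ u in 𝓝 (t • x + (1 - t) • y), (c : EReal) < h u := hlsc _ _ hcz
    have htend : Tendsto (fun s : ℝ => s • w + (1 - s) • (t • x + (1 - t) • y)) (𝓝[>] 0)
        (𝓝 (t • x + (1 - t) • y)) := by
      have hc : Continuous fun s : ℝ => s • w + (1 - s) • (t • x + (1 - t) • y) := by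
        fun_prop
      have h0 := hc.tendsto 0
      simp only [zero_smul, sub_zero, one_smul, zero_add] at h0
      exact h0.mono_left nhdsWithin_le_nhds
    have hEv1 := htend.eventually hU
    have hEv2 : ∀ᶠ s : ℝ in 𝓝[>] 0, s * r + (1 - s) * M < c := by
      have hc : Continuous fun s : ℝ => s * r + (1 - s) * M := by fun_prop
      have h0 := hc.tendsto 0
      simp only [zero_mul, sub_zero, one_mul, zero_add] at h0
      have hMc' : M < c := by exact_mod_cast hMc
      exact (h0.mono_left nhdsWithin_le_nhds).eventually_lt_const hMc'
    have hEv3 : ∀ᶠ s : ℝ in 𝓝[>] 0, s ∈ Ioo (0 : ℝ) 1 :=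
      Ioo_mem_nhdsGT_of_mem ⟨le_refl 0, one_pos⟩
    obtain ⟨s, hs1, hs2, hs3⟩ := (hEv1.and (hEv2.and hEv3)).exists
    set p := s • w + (1 - s) • (t • x + (1 - t) • y) with hp
    have hpI : p ∈ intrinsicInterior ℝ {u | F u ≠ ⊤} :=
      combo_mem_intrinsicInterior hdom hw hzdom hs3.1 hs3.2.le
    have hpF : h p = F p := heq p hpI
    have hFp : F p ≤ ((s * r + (1 - s) * M : ℝ) : EReal) := by
      refine (convexE_clConv h w _ s hs3.1 hs3.2).trans ?_
      rw [← hF, hr]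
      calc (s : EReal) * (r : EReal) + ((1 - s : ℝ) : EReal) * F (t • x + (1 - t) • y)
          ≤ (s : EReal) * r + ((1 - s : ℝ) : EReal) * M :=
            add_le_add le_rfl
              (mul_le_mul_of_nonneg_left hFz (EReal.coe_nonneg.2 (by linarith [hs3.2])))
        _ = ((s * r + (1 - s) * M : ℝ) : EReal) := by
            rw [← EReal.coe_mul, ← EReal.coe_mul, ← EReal.coe_add]
    have hlt2 : h p < (c : EReal) := by
      rw [hpF]
      exact lt_of_le_of_lt hFp (by exact_mod_cast hs2)
    exact absurd hs1 (not_lt.2 hlt2.le)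

end
end

section
/- Let φ be a distance-generating function on ℝ^n, λ > 0, f : dom φ → (-∞,∞]. Then for every ȳ ∈ int dom φ, (int dom φ) ∩ prox_{λf}(ȳ) = (∇φ + λ ∂_λ^φ f)^{-1}(∇φ(ȳ)), where ∂_λ^φ f is the left Bregman λ-level proximal subdifferential. Consequently, if range(prox_{λf}) ⊆ int dom φ, then prox_{λf} = (∇φ + λ ∂_λ^φ f)^{-1} ∘ ∇φ. -/
open Set Filter Topology RealInnerProductSpace

noncomputable section

variable {n : ℕ}

local notation "En" => EuclideanSpace ℝ (Fin n)

/-- The Bregman distance induced by `φ` with gradient map `gradφ` (real-valued;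
meaningful for `x ∈ dom φ`, `y ∈ interior (dom φ)`). -/
def breg (φ : En → ℝ) (gradφ : En → En) (x y : En) : ℝ :=
  φ x - φ y - ⟪gradφ y, x - y⟫

/-- The left Bregman proximal mapping
`prox_{λf}(ȳ) = argmin_{x ∈ dom φ} { f(x) + λ⁻¹ D_φ(x, ȳ) }`. -/
def proxSet (φ : En → ℝ) (domφ : Set En) (gradφ : En → En) (lam : ℝ)
    (f : En → EReal) (yb : En) : Set En :=
  {xb | xb ∈ domφ ∧ ∀ x ∈ domφ,
      f xb + ((lam⁻¹ * breg φ gradφ xb yb : ℝ) : EReal) ≤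
        f x + ((lam⁻¹ * breg φ gradφ x yb : ℝ) : EReal)}

/-- The left Bregman `λ`-level proximal subdifferential. -/
def psub (φ : En → ℝ) (domφ : Set En) (gradφ : En → En) (lam : ℝ)
    (f : En → EReal) (xb : En) : Set En :=
  {u | xb ∈ interior domφ ∧ ∀ x ∈ domφ,
      f xb + ((⟪u, x - xb⟫ - lam⁻¹ * breg φ gradφ x xb : ℝ) : EReal) ≤ f x}

private lemma ekey (p q : EReal) (hp : p ≠ ⊥) (hq : q ≠ ⊥) (a b : ℝ) :
    p + (a : EReal) ≤ q + (b : EReal) ↔ p + ((a - b : ℝ) : EReal) ≤ q := by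
  induction p using EReal.rec with
  | bot => simp at hp
  | top =>
    induction q using EReal.rec with
    | bot => simp at hq
    | top => simp
    | coe q =>
      simp only [EReal.top_add_coe, ← EReal.coe_add, top_le_iff]
      constructor
      · intro h; exact absurd h (EReal.coe_ne_top _)
      · intro h; exact absurd h (EReal.coe_ne_top _)
  | coe p =>
    induction q using EReal.rec with
    | bot => simp at hq
    | top => simp
    | coe q =>
      rw [← EReal.coe_add, ← EReal.coe_add, ← EReal.coe_add,
        EReal.coe_le_coe_iff, EReal.coe_le_coe_iff]
      constructor <;> intro h <;> linarith

/-- `(interior dom φ) ∩ prox_{λf}(ȳ) = (∇φ + λ∂_λ^φ f)⁻¹(∇φ(ȳ))` for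
every `ȳ ∈ interior (dom φ)`; consequently, under the range assumption
`range prox_{λf} ⊆ interior (dom φ)`, one has
`prox_{λf} = (∇φ + λ∂_λ^φ f)⁻¹ ∘ ∇φ`. -/
theorem prox_eq_warped_resolvent (φ : En → ℝ) (domφ : Set En)
    (hne : (interior domφ).Nonempty)
    (hlsc : LowerSemicontinuousOn φ domφ)
    (hconv : ConvexOn ℝ domφ φ)
    (gradφ : En → En)
    (hgrad : ∀ y ∈ interior domφ, HasGradientWithinAt φ (gradφ y) (interior domφ) y)
    (lam : ℝ) (hlam : 0 < lam)
    (f : En → EReal) (hftop : ∀ x ∉ domφ, f x = ⊤) (hfbot : ∀ x, f x ≠ ⊥) :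
    (∀ yb ∈ interior domφ,
      interior domφ ∩ proxSet φ domφ gradφ lam f yb =
        {xb | ∃ u ∈ psub φ domφ gradφ lam f xb, gradφ yb = gradφ xb + lam • u}) ∧
    ((∀ yb ∈ interior domφ, proxSet φ domφ gradφ lam f yb ⊆ interior domφ) →
      ∀ yb ∈ interior domφ,
        proxSet φ domφ gradφ lam f yb =
          {xb | ∃ u ∈ psub φ domφ gradφ lam f xb, gradφ yb = gradφ xb + lam • u}) := by
  have hlam' : lam ≠ 0 := ne_of_gt hlam
  -- the key algebraic identity
  have key : ∀ (yb xb u x : En), gradφ yb = gradφ xb + lam • u →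
      ⟪u, x - xb⟫ - lam⁻¹ * breg φ gradφ x xb =
        lam⁻¹ * breg φ gradφ xb yb - lam⁻¹ * breg φ gradφ x yb := by
    intro yb xb u x hu
    simp only [breg, hu, inner_add_left, inner_sub_right, real_inner_smul_left]
    field_simp
    ring
  have main : ∀ yb ∈ interior domφ,
      interior domφ ∩ proxSet φ domφ gradφ lam f yb =
        {xb | ∃ u ∈ psub φ domφ gradφ lam f xb, gradφ yb = gradφ xb + lam • u} := by
    intro yb hyb
    ext xb
    constructor
    · rintro ⟨hxbi, hxbd, hp⟩
      refine ⟨lam⁻¹ • (gradφ yb - gradφ xb), ⟨hxbi, ?_⟩, ?_⟩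
      · intro x hx
        have hu : gradφ yb = gradφ xb + lam • (lam⁻¹ • (gradφ yb - gradφ xb)) := by
          rw [smul_smul, mul_inv_cancel₀ hlam', one_smul]; abel
        have h := hp x hx
        rw [ekey _ _ (hfbot xb) (hfbot x)] at h
        rwa [key yb xb _ x hu]
      · rw [smul_smul, mul_inv_cancel₀ hlam', one_smul]; abel
    · rintro ⟨u, ⟨hxbi, hps⟩, hu⟩
      refine ⟨hxbi, interior_subset hxbi, ?_⟩
      intro x hx
      have h := hps x hx
      rw [key yb xb u x hu] at h
      rwa [ekey _ _ (hfbot xb) (hfbot x)]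
  refine ⟨main, fun hrange yb hyb => ?_⟩
  rw [← main yb hyb]
  exact (inter_eq_self_of_subset_right (hrange yb hyb)).symm
end
end

section
/- Let φ be a 1-coercive Legendre distance-generating function on ℝ^n, f : dom φ → ℝ finite-valued, L > 0, and x̄ ∈ int dom φ. The following are equivalent: (i) both ∂^{Lφ} f(x̄) and ∂^{Lφ}(−f)(x̄) are nonempty (level proximal subdifferentials with kernel Lφ at level 1); (ii) f is differentiable at x̄ and ∂^{Lφ}(±f)(x̄) = {±∇f(x̄)}; (iii) f is differentiable at x̄ and D_{Lφ ± f}(x, x̄) ≥ 0 for all x ∈ dom φ, where D_g(x,x̄) := g(x) − g(x̄) − ⟨∇g(x̄), x−x̄⟩. -/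
open Set Filter Topology RealInnerProductSpace

noncomputable section

variable {n : ℕ}

local notation "En" => EuclideanSpace ℝ (Fin n)

/-- The Fenchel subdifferential of `φ` (viewed as `+∞` off `domφ`). -/
def fenchelSub (φ : En → ℝ) (domφ : Set En) (x : En) : Set En :=
  {u | x ∈ domφ ∧ ∀ x' ∈ domφ, φ x + ⟪u, x' - x⟫ ≤ φ x'}

/-- `φ` (viewed as `+∞` off `domφ`) is a Legendre function. -/
def IsLegendre (φ : En → ℝ) (domφ : Set En) (gradφ : En → En) : Prop :=
  (interior domφ).Nonempty ∧
  LowerSemicontinuousOn φ domφ ∧ ConvexOn ℝ domφ φ ∧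
  (∀ y ∈ interior domφ, HasGradientWithinAt φ (gradφ y) (interior domφ) y) ∧
  (∀ (xk : ℕ → En) (b : En), (∀ k, xk k ∈ interior domφ) →
      Tendsto xk atTop (𝓝 b) → b ∈ frontier domφ →
      Tendsto (fun k => ‖gradφ (xk k)‖) atTop atTop) ∧
  (∀ s : Set En, Convex ℝ s → s ⊆ {x | (fenchelSub φ domφ x).Nonempty} →
      StrictConvexOn ℝ s φ)

/-- `φ` is 1-coercive. -/
def Coercive1 (φ : En → ℝ) (domφ : Set En) : Prop :=
  ∀ M : ℝ, ∃ R : ℝ, ∀ x ∈ domφ, R ≤ ‖x‖ → M * ‖x‖ ≤ φ x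

/-- The level proximal subdifferential with kernel `Lφ` (at level 1) of a
finite-valued `g : dom φ → ℝ`: `u ∈ ∂^{Lφ} g(x̄)` iff `x̄ ∈ interior dom φ` and
`g(x) ≥ g(x̄) + ⟨u, x − x̄⟩ − D_{Lφ}(x, x̄)` for all `x ∈ dom φ`, where
`D_{Lφ} = L·D_φ`. -/
def psubK (φ : En → ℝ) (domφ : Set En) (gradφ : En → En) (L : ℝ)
    (g : En → ℝ) (xb : En) : Set En :=
  {u | xb ∈ interior domφ ∧ ∀ x ∈ domφ,
      g xb + ⟪u, x - xb⟫ - L * breg φ gradφ x xb ≤ g x}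

namespace PointwiseBSmooth

lemma breg_littleO {φ : En → ℝ} {domφ : Set En} {gradφ : En → En} {xb : En}
    (hxb : xb ∈ interior domφ)
    (hg : HasGradientWithinAt φ (gradφ xb) (interior domφ) xb) (a : ℝ) :
    (fun x => a * breg φ gradφ x xb) =o[𝓝 xb] fun x => x - xb := by
  have hmem : interior domφ ∈ 𝓝 xb := isOpen_interior.mem_nhds hxb
  have heq : 𝓝[interior domφ] xb = 𝓝 xb := nhdsWithin_eq_nhds.2 hmem
  have h := hasGradientWithinAt_iff_isLittleO.1 hg
  rw [heq] at h
  simpa [breg] using h.const_mul_left a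

lemma eq_zero_of_inner_le_littleO {xb : En} {g : En → ℝ} {c : En}
    (hg : g =o[𝓝 xb] fun x => x - xb)
    (hle : ∀ᶠ x in 𝓝 xb, ⟪c, x - xb⟫ ≤ g x) : c = 0 := by
  by_contra hc
  have hcpos : (0:ℝ) < ‖c‖ := norm_pos_iff.mpr hc
  have h2 := hg.def (show (0:ℝ) < ‖c‖ / 2 by positivity)
  obtain ⟨δ, hδ, hball⟩ := Metric.eventually_nhds_iff.1 (h2.and hle)
  set t : ℝ := δ / (2 * ‖c‖) with ht
  have htpos : 0 < t := by positivity
  set x : En := xb + t • c with hx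
  have hxs : x - xb = t • c := by simp [hx]
  have h5 : t * ‖c‖ = δ / 2 := by
    rw [ht]; field_simp
  have hdist : dist x xb < δ := by
    rw [dist_eq_norm, hxs, norm_smul, Real.norm_eq_abs, abs_of_pos htpos, h5]
    linarith
  obtain ⟨hbound, hineq⟩ := hball hdist
  rw [hxs] at hbound hineq
  rw [real_inner_smul_right, real_inner_self_eq_norm_sq] at hineq
  simp only [norm_smul, Real.norm_eq_abs, abs_of_pos htpos] at hbound
  have hgb : g x ≤ ‖c‖ / 2 * (t * ‖c‖) := by
    calc g x ≤ |g x| := le_abs_self _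
    _ ≤ ‖c‖ / 2 * (t * ‖c‖) := hbound
  nlinarith [hineq, htpos, hcpos]

lemma sum_zero {φ : En → ℝ} {domφ : Set En} {gradφ : En → En} {L : ℝ} {xb : En}
    (hxb : xb ∈ interior domφ)
    (hg : HasGradientWithinAt φ (gradφ xb) (interior domφ) xb)
    {f : En → ℝ} {u w : En}
    (hu : u ∈ psubK φ domφ gradφ L f xb)
    (hw : w ∈ psubK φ domφ gradφ L (fun x => -f x) xb) : w = -u := by
  have hmem : interior domφ ∈ 𝓝 xb := isOpen_interior.mem_nhds hxb
  have key : ∀ᶠ x in 𝓝 xb, ⟪u + w, x - xb⟫ ≤ (2 * L) * breg φ gradφ x xb := by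
    filter_upwards [hmem] with x hx
    have hxd : x ∈ domφ := interior_subset hx
    have h1 := hu.2 x hxd
    have h2 := hw.2 x hxd
    dsimp only at h2
    rw [inner_add_left]
    linarith
  have hz : u + w = 0 :=
    eq_zero_of_inner_le_littleO (breg_littleO hxb hg (2 * L)) key
  exact eq_neg_of_add_eq_zero_right hz

lemma grad_of_mem {φ : En → ℝ} {domφ : Set En} {gradφ : En → En} {L : ℝ} {xb : En}
    (hxb : xb ∈ interior domφ)
    (hg : HasGradientWithinAt φ (gradφ xb) (interior domφ) xb)
    {f : En → ℝ} {u : En}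
    (hu : u ∈ psubK φ domφ gradφ L f xb)
    (hw : -u ∈ psubK φ domφ gradφ L (fun x => -f x) xb) :
    HasGradientWithinAt f u domφ xb := by
  have hmem : interior domφ ∈ 𝓝 xb := isOpen_interior.mem_nhds hxb
  have hlo := breg_littleO hxb hg L
  have hbig : (fun x => f x - f xb - ⟪u, x - xb⟫) =O[𝓝 xb]
      (fun x => L * breg φ gradφ x xb) := by
    apply Asymptotics.IsBigO.of_bound 1
    filter_upwards [hmem] with x hx
    have hxd : x ∈ domφ := interior_subset hx
    have h1 := hu.2 x hxd
    have h2 := hw.2 x hxd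
    dsimp only at h2
    rw [inner_neg_left] at h2
    have hA : |f x - f xb - ⟪u, x - xb⟫| ≤ L * breg φ gradφ x xb :=
      abs_le.2 ⟨by linarith, by linarith⟩
    rw [one_mul, Real.norm_eq_abs, Real.norm_eq_abs]
    exact hA.trans (le_abs_self _)
  have hfin : (fun x => f x - f xb - ⟪u, x - xb⟫) =o[𝓝 xb] fun x => x - xb :=
    hbig.trans_isLittleO hlo
  exact hasGradientWithinAt_iff_isLittleO.2 (hfin.mono nhdsWithin_le_nhds)

lemma mem_psubK_iff {φ : En → ℝ} {domφ : Set En} {gradφ : En → En} {L : ℝ} {xb : En}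
    {g : En → ℝ} {u : En} (hxb : xb ∈ interior domφ) :
    u ∈ psubK φ domφ gradφ L g xb ↔
      ∀ x ∈ domφ, 0 ≤ (L * φ x + g x) - (L * φ xb + g xb) -
        ⟪L • gradφ xb + u, x - xb⟫ := by
  constructor
  · intro h x hx
    have h1 := h.2 x hx
    simp only [breg] at h1
    rw [inner_add_left, real_inner_smul_left]
    linarith
  · intro h
    refine ⟨hxb, fun x hx => ?_⟩
    have h1 := h x hx
    rw [inner_add_left, real_inner_smul_left] at h1
    simp only [breg]
    linarith

lemma main_of_mem {φ : En → ℝ} {domφ : Set En} {gradφ : En → En} {L : ℝ} {xb : En}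
    (hxb : xb ∈ interior domφ)
    (hg : HasGradientWithinAt φ (gradφ xb) (interior domφ) xb)
    {f : En → ℝ} {u w : En}
    (hu : u ∈ psubK φ domφ gradφ L f xb)
    (hw : w ∈ psubK φ domφ gradφ L (fun x => -f x) xb) :
    HasGradientWithinAt f u domφ xb ∧
    psubK φ domφ gradφ L f xb = {u} ∧
    psubK φ domφ gradφ L (fun x => -f x) xb = {-u} := by
  have hwn : w = -u := sum_zero hxb hg hu hw
  subst hwn
  refine ⟨grad_of_mem hxb hg hu hw, ?_, ?_⟩
  · refine Set.eq_singleton_iff_unique_mem.2 ⟨hu, fun u' hu' => ?_⟩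
    have h := sum_zero hxb hg hu' hw
    exact (neg_injective h).symm
  · exact Set.eq_singleton_iff_unique_mem.2 ⟨hw, fun w' hw' => sum_zero hxb hg hu hw'⟩

end PointwiseBSmooth

/-- pointwise characterization of Bregman smoothness. For
finite-valued `f : dom φ → ℝ`, `L > 0` and `x̄ ∈ interior dom φ`, TFAE:
(i) `∂^{Lφ} f(x̄)` and `∂^{Lφ}(−f)(x̄)` are both nonempty;
(ii) `f` is differentiable at `x̄` with `∂^{Lφ}(±f)(x̄) = {±∇f(x̄)}`;
(iii) `f` is differentiable at `x̄` and `D_{Lφ ± f}(x, x̄) ≥ 0` for all `x ∈ dom φ`. -/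
theorem pointwise_B_smoothness (φ : En → ℝ) (domφ : Set En) (gradφ : En → En)
    (hLeg : IsLegendre φ domφ gradφ)
    (hcoer : Coercive1 φ domφ)
    (f : En → ℝ) (L : ℝ) (hL : 0 < L)
    (xb : En) (hxb : xb ∈ interior domφ) :
    (((psubK φ domφ gradφ L f xb).Nonempty ∧
        (psubK φ domφ gradφ L (fun x => -f x) xb).Nonempty) ↔
      (∃ v, HasGradientWithinAt f v domφ xb ∧
        psubK φ domφ gradφ L f xb = {v} ∧
        psubK φ domφ gradφ L (fun x => -f x) xb = {-v})) ∧
    ((∃ v, HasGradientWithinAt f v domφ xb ∧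
        psubK φ domφ gradφ L f xb = {v} ∧
        psubK φ domφ gradφ L (fun x => -f x) xb = {-v}) ↔
      (∃ v, HasGradientWithinAt f v domφ xb ∧
        (∀ x ∈ domφ,
          0 ≤ (L * φ x + f x) - (L * φ xb + f xb) - ⟪L • gradφ xb + v, x - xb⟫) ∧
        (∀ x ∈ domφ,
          0 ≤ (L * φ x - f x) - (L * φ xb - f xb) - ⟪L • gradφ xb - v, x - xb⟫))) := by
  obtain ⟨-, -, -, hgradφ, -, -⟩ := hLeg
  have hg := hgradφ xb hxb
  constructor
  · constructor
    · rintro ⟨⟨u, hu⟩, ⟨w, hw⟩⟩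
      obtain ⟨h1, h2, h3⟩ := PointwiseBSmooth.main_of_mem hxb hg hu hw
      exact ⟨u, h1, h2, h3⟩
    · rintro ⟨v, hv, hf, hmf⟩
      exact ⟨⟨v, by rw [hf]; exact Set.mem_singleton v⟩,
        ⟨-v, by rw [hmf]; exact Set.mem_singleton (-v)⟩⟩
  · constructor
    · rintro ⟨v, hv, hf, hmf⟩
      refine ⟨v, hv, ?_, ?_⟩
      · exact (PointwiseBSmooth.mem_psubK_iff hxb).1
          (by rw [hf]; exact Set.mem_singleton v)
      · have hm : -v ∈ psubK φ domφ gradφ L (fun x => -f x) xb := by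
          rw [hmf]; exact Set.mem_singleton (-v)
        have h := (PointwiseBSmooth.mem_psubK_iff hxb).1 hm
        intro x hx
        have h1 := h x hx
        rw [sub_eq_add_neg (L • gradφ xb) v]
        linarith
    · rintro ⟨v, hv, h1, h2⟩
      have hu : v ∈ psubK φ domφ gradφ L f xb :=
        (PointwiseBSmooth.mem_psubK_iff hxb).2 h1
      have hw : -v ∈ psubK φ domφ gradφ L (fun x => -f x) xb := by
        refine (PointwiseBSmooth.mem_psubK_iff hxb).2 fun x hx => ?_
        have h3 := h2 x hx
        rw [sub_eq_add_neg (L • gradφ xb) v] at h3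
        linarith
      obtain ⟨-, hs1, hs2⟩ := PointwiseBSmooth.main_of_mem hxb hg hu hw
      exact ⟨v, hv, hs1, hs2⟩

end
end
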